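/- Relation of minimality assumptions for DAGs (Proposition 1): For every independence model P and every DAG G on V, each of the following statements implies the next: (1) P is minimally Markovian to G; (2) G is a sparsest Markov graph of P within DAGs on V; (3) P is Pearl-minimal to G within DAGs on V; (4) P is causally minimal to G within DAGs on V. -/

import Mathlib

/-- A directed acyclic graph on vertex type `V`: a directed edge relation
with no directed cycles. -/
structure DAG (V : Type) where
  edge : V → V → Prop
  acyclic : ∀ i, ¬ Relation.TransGen edge i i

namespace DAG

variable {V : Type}

/-- `i` and `j` are adjacent in `G` (i.e. adjacent in the skeleton `sk(G)`). -/
def adj (G : DAG V) (i j : V) : Prop := G.edge i j ∨ G.edge j i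

/-- A d-connecting walk from `i` to `j` given `C`: consecutive nodes are adjacent,
and an interior node is a collider on the walk if and only if it lies in `C`. -/
def ConnWalk (G : DAG V) (i j : V) (C : Set V) : Prop :=
  ∃ (n : ℕ) (w : ℕ → V), w 0 = i ∧ w n = j ∧
    (∀ m, m < n → G.adj (w m) (w (m + 1))) ∧
    (∀ m, 0 < m → m < n →
      ((G.edge (w (m - 1)) (w m) ∧ G.edge (w (m + 1)) (w m)) ↔ w m ∈ C))

/-- d-separation of `A` and `B` given `C` in the DAG `G`. -/
def dsep (G : DAG V) (A B C : Set V) : Prop :=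
  ∀ i ∈ A, ∀ j ∈ B, ¬ G.ConnWalk i j C

end DAG

/-- The components of the triple `t` are pairwise disjoint. -/
def DisjTriple {V : Type} (t : Set V × Set V × Set V) : Prop :=
  Disjoint t.1 t.2.1 ∧ Disjoint t.1 t.2.2 ∧ Disjoint t.2.1 t.2.2

/-- The independence model `J(G)` of a DAG `G`: all triples `(A, B, C)` of pairwise
disjoint sets with `A ⊥_G B | C`.  Two DAGs are Markov equivalent iff their
independence models are equal. -/
def DAG.J {V : Type} (G : DAG V) : Set (Set V × Set V × Set V) :=
  {t | DisjTriple t ∧ G.dsep t.1 t.2.1 t.2.2}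

/-- Adjacency in the skeleton `sk(P)` of an independence model `P`: distinct `i, j`
are adjacent iff there is no `C ⊆ V ∖ {i,j}` with `i ⊥⊥ j | C` in `P`. -/
def skP {V : Type} (P : Set (Set V × Set V × Set V)) (i j : V) : Prop :=
  i ≠ j ∧ ¬ ∃ C : Set V, i ∉ C ∧ j ∉ C ∧ (({i} : Set V), ({j} : Set V), C) ∈ P

/-- A v-configuration `i ∼ k ∼ j` in the undirected graph with adjacency
relation `R`. -/
def VConfig {V : Type} (R : V → V → Prop) (i k j : V) : Prop :=
  i ≠ j ∧ R i k ∧ R j k ∧ ¬ R i j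

/-- The v-configuration `i ∼ k ∼ j` is a collider (`i → k ← j`) in `G`. -/
def DAG.IsCollider {V : Type} (G : DAG V) (i k j : V) : Prop :=
  G.edge i k ∧ G.edge j k

/-- `P` is Markovian to `G`: `J(G) ⊆ J(P)`. -/
def MarkovTo {V : Type} (P : Set (Set V × Set V × Set V)) (G : DAG V) : Prop :=
  DAG.J G ⊆ P

/-- `P` is minimally Markovian to `G`: `P` is Markovian to `G` and `sk(P) = sk(G)`. -/
def MinMarkov {V : Type} (P : Set (Set V × Set V × Set V)) (G : DAG V) : Prop :=
  MarkovTo P G ∧ ∀ i j, skP P i j ↔ G.adj i j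

/-- The number of edges of a DAG. -/
noncomputable def edgeCard {V : Type} (G : DAG V) : ℕ :=
  Set.ncard {p : V × V | G.edge p.1 p.2}

/-- `G` is a sparsest Markov graph of `P` within DAGs on `V`. -/
def SparsestMarkov {V : Type} (P : Set (Set V × Set V × Set V)) (G : DAG V) : Prop :=
  MarkovTo P G ∧ ∀ G' : DAG V, MarkovTo P G' → edgeCard G ≤ edgeCard G'

/-- `P` is Pearl-minimal to `G` within DAGs on `V`: `P` is Markovian to `G` and
there is no DAG `G'` with `J(G) ⊊ J(G') ⊆ J(P)`. -/
def PearlMinimal {V : Type} (P : Set (Set V × Set V × Set V)) (G : DAG V) : Prop :=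
  MarkovTo P G ∧ ¬ ∃ G' : DAG V, DAG.J G ⊂ DAG.J G' ∧ DAG.J G' ⊆ P

/-- `G'` is a subgraph of the DAG `G`. -/
def DAG.Subgraph {V : Type} (G' G : DAG V) : Prop :=
  ∀ i j, G'.edge i j → G.edge i j

/-- `P` is causally minimal to `G` within DAGs on `V`: `P` is Markovian to `G` and
not Markovian to any proper subgraph of `G` that is a DAG. -/
def CausallyMinimal {V : Type} (P : Set (Set V × Set V × Set V)) (G : DAG V) : Prop :=
  MarkovTo P G ∧
    ¬ ∃ G' : DAG V, DAG.Subgraph G' G ∧ G'.edge ≠ G.edge ∧ MarkovTo P G'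
open Relation

namespace MinimalityChain

variable {V : Type}

lemma edge_irrefl (G : DAG V) (u : V) : ¬ G.edge u u :=
  fun h => G.acyclic u (TransGen.single h)

lemma edge_asymm (G : DAG V) {u v : V} (h : G.edge u v) (h' : G.edge v u) : False :=
  G.acyclic u (TransGen.tail (TransGen.single h) h')

lemma adj_symm {G : DAG V} {u v : V} (h : G.adj u v) : G.adj v u := Or.symm h

lemma adj_irrefl (G : DAG V) (u : V) : ¬ G.adj u u := by
  rintro (h | h) <;> exact edge_irrefl G u h

/-- orientation flag of a traversed edge: `g = true` iff the edge points into the head `v`. -/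
def eflag (G : DAG V) (u v : V) (g : Bool) : Prop := if g then G.edge u v else G.edge v u

lemma eflag_adj {G : DAG V} {u v : V} {g : Bool} (h : eflag G u v g) : G.adj u v := by
  cases g
  · exact Or.inr h
  · exact Or.inl h

lemma eflag_true {G : DAG V} {u v : V} (h : G.edge u v) : eflag G u v true := h

lemma eflag_false {G : DAG V} {u v : V} (h : G.edge v u) : eflag G u v false := h

lemma eflag_fwd_iff {G : DAG V} {u v : V} {g : Bool} (h : eflag G u v g) :
    G.edge u v ↔ g = true := by
  cases g
  · simp only [eflag, if_false] at h
    simp only [Bool.false_eq_true, iff_false]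
    exact fun h' => edge_asymm G h' h
  · simp only [eflag, if_true] at h
    exact Iff.intro (fun _ => rfl) (fun _ => h)

lemma eflag_bwd_iff {G : DAG V} {u v : V} {g : Bool} (h : eflag G u v g) :
    G.edge v u ↔ g = false := by
  cases g
  · simp only [eflag, if_false] at h
    exact Iff.intro (fun _ => rfl) (fun _ => h)
  · simp only [eflag, if_true] at h
    simp only [Bool.true_eq_false, iff_false]
    exact fun h' => edge_asymm G h h'

/-- legality of passing through `u`: collider (arrived into `u`, left via an edge into `u`)
iff `u ∈ C`.  `of = none` at the start of the walk: no condition. -/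
def legal (C : Set V) (u : V) (of : Option Bool) (g : Bool) : Prop :=
  match of with
  | none => True
  | some f => ((f = true ∧ g = false) ↔ u ∈ C)

/-- `Reach G C i v (some f)`: there is a C-connecting walk (of length ≥ 1) from `i` to `v`
whose last edge has orientation flag `f` at `v`. -/
inductive Reach (G : DAG V) (C : Set V) (i : V) : V → Option Bool → Prop
  | start : Reach G C i i none
  | step {u v : V} {of : Option Bool} {g : Bool} :
      Reach G C i u of → eflag G u v g → legal C u of g → Reach G C i v (some g)

lemma reach_none {G : DAG V} {C : Set V} {i v : V} (h : Reach G C i v none) : v = i := by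
  cases h; rfl

lemma reach_to_walk {G : DAG V} {C : Set V} {i : V} :
    ∀ {v : V} {of : Option Bool}, Reach G C i v of → ∀ f, of = some f →
    ∃ n : ℕ, ∃ w : ℕ → V, 0 < n ∧ w 0 = i ∧ w n = v ∧
      (∀ m, m < n → G.adj (w m) (w (m + 1))) ∧
      (∀ m, 0 < m → m < n →
        ((G.edge (w (m - 1)) (w m) ∧ G.edge (w (m + 1)) (w m)) ↔ w m ∈ C)) ∧
      eflag G (w (n - 1)) v f := by
  intro v of h
  induction h with
  | start => intro f hf; exact absurd hf (by simp)
  | @step u v of g hr he hok ih =>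
    intro f hf
    obtain rfl : g = f := by injection hf
    cases of with
    | none =>
      obtain rfl : i = u := (reach_none hr).symm
      refine ⟨1, fun m => if m = 0 then i else v, one_pos, if_pos rfl, if_neg one_ne_zero,
        ?_, ?_, ?_⟩
      · intro m hm
        obtain rfl : m = 0 := by omega
        simpa using eflag_adj he
      · intro m h1 h2; omega
      · simpa using he
    | some f' =>
      obtain ⟨n, w, hn, h0, hv, hadj, hst, hlast⟩ := ih f' rfl
      have hwle : ∀ m, m ≤ n → (fun m => if m ≤ n then w m else v) m = w m := by
        intro m hm; simp [hm]
      refine ⟨n + 1, fun m => if m ≤ n then w m else v, by omega, ?_, ?_, ?_, ?_, ?_⟩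
      · rw [hwle 0 (by omega)]; exact h0
      · simp
      · intro m hm
        rcases Nat.lt_or_ge m n with hlt | hge
        · rw [hwle m (by omega), hwle (m+1) (by omega)]; exact hadj m hlt
        · obtain rfl : m = n := by omega
          rw [hwle m le_rfl]
          simp only [Nat.lt_irrefl, if_neg (by omega : ¬ m + 1 ≤ m)]
          rw [hv]
          exact eflag_adj he
      · intro m h1 h2
        rcases Nat.lt_or_ge m n with hlt | hge
        · rw [hwle (m-1) (by omega), hwle m (by omega), hwle (m+1) (by omega)]
          exact hst m h1 hlt
        · obtain rfl : m = n := by omega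
          have hbv : (fun m_2 => if m_2 ≤ m then w m_2 else v) (m + 1) = v := by
            show (if m + 1 ≤ m then w (m + 1) else v) = v
            exact if_neg (by omega)
          rw [hwle (m-1) (by omega), hwle m le_rfl, hbv, hv]
          have e1 : G.edge (w (m-1)) u ↔ f' = true := eflag_fwd_iff hlast
          have e2 : G.edge v u ↔ g = false := eflag_bwd_iff he
          rw [e1, e2]
          exact hok
      · have : n + 1 - 1 = n := by omega
        rw [this, hwle n le_rfl, hv]
        exact he

lemma connWalk_of_reach {G : DAG V} {C : Set V} {i j : V} {f : Bool}
    (h : Reach G C i j (some f)) : G.ConnWalk i j C := by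
  obtain ⟨n, w, _, h0, hn, hadj, hst, _⟩ := reach_to_walk h f rfl
  exact ⟨n, w, h0, hn, hadj, hst⟩

lemma reach_of_connWalk {G : DAG V} {C : Set V} {i j : V} (hij : i ≠ j)
    (h : G.ConnWalk i j C) : ∃ f, Reach G C i j (some f) := by
  classical
  obtain ⟨n, w, h0, hn, hadj, hst⟩ := h
  have hpos : 0 < n := by
    rcases Nat.eq_zero_or_pos n with rfl | h'
    · exact absurd (h0.symm.trans hn) hij
    · exact h'
  set fl : ℕ → Bool := fun k => if G.edge (w k) (w (k+1)) then true else false with hfl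
  have hef : ∀ k, k < n → eflag G (w k) (w (k+1)) (fl k) := by
    intro k hk
    by_cases h' : G.edge (w k) (w (k+1))
    · simp only [hfl, if_pos h']; exact h'
    · simp only [hfl, if_neg h']
      rcases hadj k hk with h'' | h''
      · exact absurd h'' h'
      · exact h''
  have key : ∀ m, m < n → Reach G C i (w (m+1)) (some (fl m)) := by
    intro m
    induction m with
    | zero =>
      intro h0n
      have hs : Reach G C i (w 0) none := by rw [h0]; exact Reach.start
      exact Reach.step hs (hef 0 h0n) trivial
    | succ m ih =>
      intro hlt
      have hm : m < n := by omega
      refine Reach.step (ih hm) (hef (m+1) hlt) ?_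
      show ((fl m = true ∧ fl (m+1) = false) ↔ w (m+1) ∈ C)
      have hst' := hst (m+1) (by omega) hlt
      simp only [Nat.add_sub_cancel] at hst'
      have b1 : fl m = true ↔ G.edge (w m) (w (m+1)) := by
        by_cases h' : G.edge (w m) (w (m+1)) <;> simp [hfl, h']
      have b2 : fl (m+1) = false ↔ G.edge (w (m+2)) (w (m+1)) := by
        by_cases h' : G.edge (w (m+1)) (w (m+2))
        · have h2 : ¬ G.edge (w (m+2)) (w (m+1)) := fun hk => edge_asymm G h' hk
          simp [hfl, h', h2]
        · have h2 : G.edge (w (m+2)) (w (m+1)) := by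
            rcases hadj (m+1) hlt with hk | hk
            · exact absurd hk h'
            · exact hk
          simp [hfl, h', h2]
      rw [b1, b2]
      exact hst'
  refine ⟨fl (n-1), ?_⟩
  have := key (n-1) (by omega)
  rw [Nat.sub_add_cancel hpos] at this
  exact hn ▸ this

lemma connWalk_symm {G : DAG V} {C : Set V} {i j : V} (h : G.ConnWalk i j C) :
    G.ConnWalk j i C := by
  obtain ⟨n, w, h0, hn, hadj, hst⟩ := h
  refine ⟨n, fun m => w (n - m), by simpa using hn, by simpa using h0, ?_, ?_⟩
  · intro m hm
    show G.adj (w (n - m)) (w (n - (m + 1)))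
    have hk : n - m - 1 + 1 = n - m := by omega
    have hlt : n - m - 1 < n := by omega
    have := hadj (n - m - 1) hlt
    rw [hk] at this
    have hidx : n - (m + 1) = n - m - 1 := by omega
    rw [hidx]
    exact adj_symm this
  · intro m h1 h2
    show (G.edge (w (n - (m - 1))) (w (n - m)) ∧ G.edge (w (n - (m + 1))) (w (n - m))) ↔
      w (n - m) ∈ C
    have e1 : n - (m - 1) = n - m + 1 := by omega
    have e2 : n - (m + 1) = n - m - 1 := by omega
    rw [e1, e2, and_comm]
    exact hst (n - m) (by omega) (by omega)

lemma connWalk_of_adj {G : DAG V} {i j : V} (h : G.adj i j) (C : Set V) :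
    G.ConnWalk i j C := by
  refine ⟨1, fun m => if m = 0 then i else j, if_pos rfl, if_neg one_ne_zero, ?_, ?_⟩
  · intro m hm
    obtain rfl : m = 0 := by omega
    simpa using h
  · intro m h1 h2; omega

lemma not_connWalk_of_memJ {G : DAG V} {x y : V} {C : Set V}
    (h : (({x}, {y}, C) : Set V × Set V × Set V) ∈ DAG.J G) : ¬ G.ConnWalk x y C :=
  h.2 x rfl y rfl

lemma not_connWalk_pa {G : DAG V} {x y : V} (hxy : x ≠ y) (hnadj : ¬ G.adj x y)
    (hnd : ¬ TransGen G.edge x y) : ¬ G.ConnWalk x y {z | G.edge z x} := by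
  intro h
  obtain ⟨f, hr⟩ := reach_of_connWalk hxy h
  have inv : ∀ v (of : Option Bool), Reach G {z | G.edge z x} x v of → ∀ g, of = some g →
      (g = true ∧ TransGen G.edge x v) ∨ (g = false ∧ G.edge v x) := by
    intro v of h
    induction h with
    | start => intro g hg; exact absurd hg (by simp)
    | @step u v of g hr he hok ih =>
      intro g' hg'
      obtain rfl : g = g' := by injection hg'
      cases of with
      | none =>
        obtain rfl : u = x := reach_none hr
        cases g
        · exact Or.inr ⟨rfl, he⟩
        · exact Or.inl ⟨rfl, TransGen.single he⟩
      | some f' =>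
        rcases ih f' rfl with ⟨hf', htg⟩ | ⟨hf', hex⟩
        · subst hf'
          cases g
          · have hmem : u ∈ {z | G.edge z x} := hok.mp ⟨rfl, rfl⟩
            exact absurd (G.acyclic x (TransGen.tail htg hmem)) (fun h => h)
          · exact Or.inl ⟨rfl, TransGen.tail htg he⟩
        · subst hf'
          have : u ∉ {z | G.edge z x} := fun hm => by
            have := hok.mpr hm
            simp at this
          exact absurd hex this
  rcases inv y _ hr f rfl with ⟨_, hd⟩ | ⟨_, he⟩
  · exact hnd hd
  · exact hnadj (Or.inr he)

lemma sep_of_not_adj (G : DAG V) {x y : V} (hxy : x ≠ y) (hnadj : ¬ G.adj x y) :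
    ∃ C : Set V, x ∉ C ∧ y ∉ C ∧ (({x}, {y}, C) : Set V × Set V × Set V) ∈ DAG.J G := by
  have hnadj' : ¬ G.adj y x := fun h => hnadj (adj_symm h)
  have hcase : ¬ TransGen G.edge x y ∨ ¬ TransGen G.edge y x := by
    by_contra hcon
    push_neg at hcon
    exact G.acyclic x (TransGen.trans hcon.1 hcon.2)
  have hdisj : ∀ C : Set V, x ∉ C → y ∉ C → DisjTriple (({x}, {y}, C) : Set V × Set V × Set V) := by
    intro C hx hy
    refine ⟨by simpa using hxy, by simpa using hx, by simpa using hy⟩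
  rcases hcase with hnd | hnd
  · refine ⟨{z | G.edge z x}, edge_irrefl G x, fun h => hnadj (Or.inr h), ?_⟩
    refine ⟨hdisj _ (edge_irrefl G x) (fun h => hnadj (Or.inr h)), ?_⟩
    intro a ha b hb
    obtain rfl : a = x := ha
    obtain rfl : b = y := hb
    exact not_connWalk_pa hxy hnadj hnd
  · refine ⟨{z | G.edge z y}, fun h => hnadj (Or.inl h), edge_irrefl G y, ?_⟩
    refine ⟨hdisj _ (fun h => hnadj (Or.inl h)) (edge_irrefl G y), ?_⟩
    intro a ha b hb
    obtain rfl : a = x := ha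
    obtain rfl : b = y := hb
    exact fun hc => not_connWalk_pa hxy.symm hnadj' hnd (connWalk_symm hc)

end MinimalityChain
namespace MinimalityChain

variable {V : Type}

lemma adj_of_skP {P : Set (Set V × Set V × Set V)} {G' : DAG V} (hM : MarkovTo P G')
    {i j : V} (h : skP P i j) : G'.adj i j := by
  by_contra hn
  obtain ⟨C, hx, hy, hmem⟩ := sep_of_not_adj G' h.1 hn
  exact h.2 ⟨C, hx, hy, hM hmem⟩

lemma edgeCard_le [Fintype V] {G G' : DAG V} (h : ∀ u v, G.adj u v → G'.adj u v) :
    edgeCard G ≤ edgeCard G' := by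
  classical
  set f : V × V → V × V := fun p => if G'.edge p.1 p.2 then p else (p.2, p.1) with hf
  have hmaps : ∀ p ∈ {p : V × V | G.edge p.1 p.2}, f p ∈ {p : V × V | G'.edge p.1 p.2} := by
    intro p hp
    have hadj : G'.adj p.1 p.2 := h _ _ (Or.inl hp)
    by_cases h1 : G'.edge p.1 p.2
    · simpa [hf, h1] using h1
    · have h2 : G'.edge p.2 p.1 := by
        rcases hadj with h' | h'
        · exact absurd h' h1
        · exact h'
      simpa [hf, h1] using h2
  have hinj : Set.InjOn f {p : V × V | G.edge p.1 p.2} := by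
    intro p hp q hq heq
    by_cases h1 : G'.edge p.1 p.2 <;> by_cases h2 : G'.edge q.1 q.2 <;>
      simp only [hf, if_pos, if_neg, h1, h2, if_true, if_false] at heq
    · exact heq
    · exfalso
      have hq2 : G.edge q.1 q.2 := hq
      have hp2 : G.edge p.1 p.2 := hp
      rw [heq] at hp2
      exact edge_asymm G hq2 hp2
    · exfalso
      have hq2 : G.edge q.1 q.2 := hq
      have hp2 : G.edge p.1 p.2 := hp
      rw [← heq] at hq2
      exact edge_asymm G hp2 hq2
    · obtain ⟨e2, e1⟩ := Prod.mk.injEq .. ▸ heq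
      exact Prod.ext e1 e2
  calc edgeCard G = (f '' {p : V × V | G.edge p.1 p.2}).ncard :=
        (Set.ncard_image_of_injOn hinj).symm
    _ ≤ edgeCard G' := by
        apply Set.ncard_le_ncard _ (Set.toFinite _)
        rintro q ⟨p, hp, rfl⟩
        exact hmaps p hp

lemma adj_iff_of_J_subset [Fintype V] {G G' : DAG V} (hJ : DAG.J G ⊆ DAG.J G')
    (hcard : edgeCard G ≤ edgeCard G') : ∀ u v, G.adj u v ↔ G'.adj u v := by
  classical
  have hA : ∀ u v, G'.adj u v → G.adj u v := by
    intro u v h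
    by_contra hn
    have huv : u ≠ v := by
      rintro rfl
      exact adj_irrefl G' u h
    obtain ⟨C, hu, hv, hmem⟩ := sep_of_not_adj G huv hn
    exact not_connWalk_of_memJ (hJ hmem) (connWalk_of_adj h C)
  set g : V × V → V × V := fun p => if G.edge p.1 p.2 then p else (p.2, p.1) with hg
  set E : Set (V × V) := {p : V × V | G.edge p.1 p.2} with hE
  set E' : Set (V × V) := {p : V × V | G'.edge p.1 p.2} with hE'
  have hmaps : ∀ p ∈ E', g p ∈ E := by
    intro p hp
    have hadj : G.adj p.1 p.2 := hA _ _ (Or.inl hp)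
    by_cases h1 : G.edge p.1 p.2
    · have he : g p = p := by simp [hg, h1]
      rw [he]
      exact h1
    · have h2 : G.edge p.2 p.1 := by
        rcases hadj with h' | h'
        · exact absurd h' h1
        · exact h'
      have he : g p = (p.2, p.1) := by simp [hg, h1]
      rw [he]
      exact h2
  have hinj : Set.InjOn g E' := by
    intro p hp q hq heq
    by_cases h1 : G.edge p.1 p.2 <;> by_cases h2 : G.edge q.1 q.2 <;>
      simp only [hg, if_pos, if_neg, h1, h2, if_true, if_false] at heq
    · exact heq
    · exfalso
      have hq2 : G'.edge q.1 q.2 := hq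
      have hp2 : G'.edge p.1 p.2 := hp
      rw [heq] at hp2
      exact edge_asymm G' hq2 hp2
    · exfalso
      have hq2 : G'.edge q.1 q.2 := hq
      have hp2 : G'.edge p.1 p.2 := hp
      rw [← heq] at hq2
      exact edge_asymm G' hp2 hq2
    · obtain ⟨e2, e1⟩ := Prod.mk.injEq .. ▸ heq
      exact Prod.ext e1 e2
  have heqset : g '' E' = E := by
    apply Set.eq_of_subset_of_ncard_le
    · rintro q ⟨p, hp, rfl⟩
      exact hmaps p hp
    · rw [Set.ncard_image_of_injOn hinj]
      exact hcard
    · exact Set.toFinite _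
  intro u v
  constructor
  · intro hadj
    have key : ∀ x y : V, G.edge x y → G'.adj x y := by
      intro x y hxy
      have : (x, y) ∈ E := hxy
      rw [← heqset] at this
      obtain ⟨p, hp, hgp⟩ := this
      by_cases h1 : G.edge p.1 p.2
      · simp only [hg, if_pos h1] at hgp
        rw [hgp] at hp
        exact Or.inl hp
      · simp only [hg, if_neg h1] at hgp
        have : p = (y, x) := by
          have e1 : p.2 = x := congrArg Prod.fst hgp
          have e2 : p.1 = y := congrArg Prod.snd hgp
          exact Prod.ext e2 e1
        rw [this] at hp
        exact Or.inr hp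
    rcases hadj with h' | h'
    · exact key u v h'
    · exact adj_symm (key v u h')
  · exact hA u v

/-- Unshielded-collider agreement between two DAGs. -/
def IsUCeq (G H : DAG V) : Prop :=
  ∀ x k y, x ≠ y → G.adj x k → G.adj y k → ¬ G.adj x y →
    (G.IsCollider x k y ↔ H.IsCollider x k y)

lemma ucEq_of_J_subset {G H : DAG V}
    (hadj : ∀ u v, G.adj u v ↔ H.adj u v) (hsub : DAG.J G ⊆ DAG.J H) : IsUCeq G H := by
  intro x k y hxy hxk hyk hnxy
  obtain ⟨C, hxC, hyC, hmem⟩ := sep_of_not_adj G hxy hnxy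
  have hdG : ¬ G.ConnWalk x y C := not_connWalk_of_memJ hmem
  have hdH : ¬ H.ConnWalk x y C := not_connWalk_of_memJ (hsub hmem)
  have hHxk : H.adj x k := (hadj x k).mp hxk
  have hHyk : H.adj y k := (hadj y k).mp hyk
  have hGxk : ∃ g, eflag G x k g := by
    rcases hxk with h | h
    · exact ⟨true, h⟩
    · exact ⟨false, h⟩
  have hGky : ∃ g, eflag G k y g := by
    rcases hyk with h | h
    · exact ⟨false, h⟩
    · exact ⟨true, h⟩
  have hHxk' : ∃ g, eflag H x k g := by
    rcases hHxk with h | h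
    · exact ⟨true, h⟩
    · exact ⟨false, h⟩
  have hHky' : ∃ g, eflag H k y g := by
    rcases hHyk with h | h
    · exact ⟨false, h⟩
    · exact ⟨true, h⟩
  constructor
  · intro hG
    have hkC : k ∉ C := by
      intro hk
      apply hdG
      apply connWalk_of_reach (f := false)
      refine Reach.step (Reach.step Reach.start (eflag_true hG.1) trivial)
        (eflag_false hG.2) ?_
      show (true = true ∧ false = false) ↔ k ∈ C
      simp [hk]
    by_contra hH
    apply hdH
    obtain ⟨g1, hg1⟩ := hHxk'
    obtain ⟨g2, hg2⟩ := hHky'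
    apply connWalk_of_reach (f := g2)
    refine Reach.step (Reach.step Reach.start hg1 trivial) hg2 ?_
    show (g1 = true ∧ g2 = false) ↔ k ∈ C
    constructor
    · rintro ⟨e1, e2⟩
      exfalso
      apply hH
      constructor
      · exact (eflag_fwd_iff hg1).mpr e1
      · exact (eflag_bwd_iff hg2).mpr e2
    · intro hk; exact absurd hk hkC
  · intro hH
    by_contra hG
    by_cases hkC : k ∈ C
    · apply hdH
      apply connWalk_of_reach (f := false)
      refine Reach.step (Reach.step Reach.start (eflag_true hH.1) trivial)
        (eflag_false hH.2) ?_
      show (true = true ∧ false = false) ↔ k ∈ C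
      simp [hkC]
    · apply hdG
      obtain ⟨g1, hg1⟩ := hGxk
      obtain ⟨g2, hg2⟩ := hGky
      apply connWalk_of_reach (f := g2)
      refine Reach.step (Reach.step Reach.start hg1 trivial) hg2 ?_
      show (g1 = true ∧ g2 = false) ↔ k ∈ C
      constructor
      · rintro ⟨e1, e2⟩
        exfalso
        apply hG
        constructor
        · exact (eflag_fwd_iff hg1).mpr e1
        · exact (eflag_bwd_iff hg2).mpr e2
      · intro hk; exact absurd hk hkC

lemma connWalk_congr {G H : DAG V} (h : ∀ u v, G.edge u v ↔ H.edge u v) {i j : V} {C : Set V} :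
    G.ConnWalk i j C → H.ConnWalk i j C := by
  rintro ⟨n, w, h0, hn, hadj, hst⟩
  refine ⟨n, w, h0, hn, ?_, ?_⟩
  · intro m hm
    rcases hadj m hm with h' | h'
    · exact Or.inl ((h _ _).mp h')
    · exact Or.inr ((h _ _).mp h')
  · intro m h1 h2
    rw [← h, ← h]
    exact hst m h1 h2

lemma J_congr {G H : DAG V} (h : ∀ u v, G.edge u v ↔ H.edge u v) : DAG.J G = DAG.J H := by
  have h' : ∀ u v, H.edge u v ↔ G.edge u v := fun u v => (h u v).symm
  ext t
  constructor
  · rintro ⟨hd, hs⟩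
    exact ⟨hd, fun x hx y hy hc => hs x hx y hy (connWalk_congr h' hc)⟩
  · rintro ⟨hd, hs⟩
    exact ⟨hd, fun x hx y hy hc => hs x hx y hy (connWalk_congr h hc)⟩

lemma edge_iff_of_subgraph {G' G : DAG V} (h : DAG.Subgraph G' G) {u v : V}
    (hadj : G'.adj u v) : G'.edge u v ↔ G.edge u v := by
  constructor
  · exact h u v
  · intro hG
    rcases hadj with h' | h'
    · exact h'
    · exact absurd (h v u h') (fun hk => edge_asymm G hG hk)

lemma connWalk_of_subgraph {G' G : DAG V} (h : DAG.Subgraph G' G) {i j : V} {C : Set V} :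
    G'.ConnWalk i j C → G.ConnWalk i j C := by
  rintro ⟨n, w, h0, hn, hadj, hst⟩
  refine ⟨n, w, h0, hn, ?_, ?_⟩
  · intro m hm
    rcases hadj m hm with h' | h'
    · exact Or.inl (h _ _ h')
    · exact Or.inr (h _ _ h')
  · intro m h1 h2
    have e1 : G.edge (w (m-1)) (w m) ↔ G'.edge (w (m-1)) (w m) := by
      have hadj1 : G'.adj (w (m-1)) (w m) := by
        have := hadj (m-1) (by omega)
        have e : m - 1 + 1 = m := by omega
        rwa [e] at this
      exact (edge_iff_of_subgraph h hadj1).symm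
    have e2 : G.edge (w (m+1)) (w m) ↔ G'.edge (w (m+1)) (w m) := by
      have hadj2 : G'.adj (w m) (w (m+1)) := hadj m h2
      exact (edge_iff_of_subgraph h (adj_symm hadj2)).symm
    rw [e1, e2]
    exact hst m h1 h2

lemma J_subset_of_subgraph {G' G : DAG V} (h : DAG.Subgraph G' G) : DAG.J G ⊆ DAG.J G' := by
  rintro t ⟨hd, hs⟩
  exact ⟨hd, fun x hx y hy hc => hs x hx y hy (connWalk_of_subgraph h hc)⟩

end MinimalityChain
namespace MinimalityChain

open Relation

variable {V : Type}

/-- `a → b` is a covered edge in `G`: the parents of `a` are exactly the parents of `b`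
other than `a`. -/
def Covered (G : DAG V) (a b : V) : Prop :=
  G.edge a b ∧ ∀ x, G.edge x a ↔ (G.edge x b ∧ x ≠ a)

lemma Covered.ne {G : DAG V} {a b : V} (hc : Covered G a b) : a ≠ b := by
  rintro rfl
  exact edge_irrefl G a hc.1

/-- the edge relation of `G` with the edge `a → b` reversed. -/
def revEdge (G : DAG V) (a b : V) : V → V → Prop :=
  fun u v => (G.edge u v ∧ ¬(u = a ∧ v = b)) ∨ (u = b ∧ v = a)

lemma rev_acyclic {G : DAG V} {a b : V} (hc : Covered G a b) :
    ∀ z, ¬ TransGen (revEdge G a b) z z := by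
  set E' : V → V → Prop := fun u v => G.edge u v ∧ ¬(u = a ∧ v = b) with hE'
  have sub1 : ∀ u v, TransGen (revEdge G a b) u v →
      TransGen E' u v ∨ (ReflTransGen E' u b ∧ ReflTransGen E' a v) := by
    intro u v h
    induction h with
    | single h' =>
      rcases h' with h' | ⟨rfl, rfl⟩
      · exact Or.inl (TransGen.single h')
      · exact Or.inr ⟨ReflTransGen.refl, ReflTransGen.refl⟩
    | tail h1 h2 ih =>
      rcases ih with htg | ⟨hub, hav⟩
      · rcases h2 with h2 | ⟨rfl, rfl⟩
        · exact Or.inl (TransGen.tail htg h2)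
        · exact Or.inr ⟨htg.to_reflTransGen, ReflTransGen.refl⟩
      · rcases h2 with h2 | ⟨rfl, rfl⟩
        · exact Or.inr ⟨hub, ReflTransGen.tail hav h2⟩
        · exact Or.inr ⟨hub, ReflTransGen.refl⟩
  have sub2 : ¬ ReflTransGen E' a b := by
    intro h
    rcases Relation.reflTransGen_iff_eq_or_transGen.mp h with heq | htg
    · exact hc.ne heq.symm
    · obtain ⟨y, hay, hyb⟩ := (Relation.TransGen.tail'_iff).mp htg
      have hyne : y ≠ a := by
        intro hy
        exact hyb.2 ⟨hy, rfl⟩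
      have hya : G.edge y a := (hc.2 y).mpr ⟨hyb.1, hyne⟩
      have hay' : ReflTransGen G.edge a y := ReflTransGen.mono (r := E') (p := G.edge) (fun x y h => h.1) a y hay
      rcases Relation.reflTransGen_iff_eq_or_transGen.mp hay' with heq | htg'
      · exact hyne heq
      · exact G.acyclic a (TransGen.tail htg' hya)
  intro z hz
  rcases sub1 z z hz with htg | ⟨h1, h2⟩
  · exact G.acyclic z (TransGen.mono (r := E') (p := G.edge) (fun x y hxy => hxy.1) z z htg)
  · exact sub2 (h2.trans h1)

/-- the DAG obtained from `G` by reversing the covered edge `a → b`. -/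
def revDAG (G : DAG V) (a b : V) (hc : Covered G a b) : DAG V :=
  ⟨revEdge G a b, rev_acyclic hc⟩

section RevFacts

variable {G : DAG V} {a b : V} (hc : Covered G a b)

lemma rev_edge_ba : (revDAG G a b hc).edge b a := Or.inr ⟨rfl, rfl⟩

lemma rev_edge_not_ab : ¬ (revDAG G a b hc).edge a b := by
  rintro (⟨h1, h2⟩ | ⟨h1, h2⟩)
  · exact h2 ⟨rfl, rfl⟩
  · exact hc.ne h1

lemma rev_edge_of_edge {u v : V} (h : G.edge u v) (hne : ¬(u = a ∧ v = b)) :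
    (revDAG G a b hc).edge u v := Or.inl ⟨h, hne⟩

lemma rev_edge_other {u v : V} (hne : ¬((u = a ∧ v = b) ∨ (u = b ∧ v = a))) :
    (revDAG G a b hc).edge u v ↔ G.edge u v := by
  constructor
  · rintro (⟨h1, -⟩ | ⟨rfl, rfl⟩)
    · exact h1
    · exact absurd (Or.inr ⟨rfl, rfl⟩) hne
  · intro h
    exact Or.inl ⟨h, fun hk => hne (Or.inl hk)⟩

/-- parents of `b` in the reversed graph are exactly the parents of `a` in `G`. -/
lemma rev_pa_b {x : V} : (revDAG G a b hc).edge x b ↔ G.edge x a := by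
  constructor
  · rintro (⟨h1, h2⟩ | ⟨rfl, h2⟩)
    · have hxa : x ≠ a := fun hx => h2 ⟨hx, rfl⟩
      exact (hc.2 x).mpr ⟨h1, hxa⟩
    · exact absurd h2.symm hc.ne
  · intro h
    have h' := (hc.2 x).mp h
    refine Or.inl ⟨h'.1, ?_⟩
    rintro ⟨rfl, -⟩
    exact h'.2 rfl

/-- parents of `a` in the reversed graph: parents of `a` in `G`, plus `b`. -/
lemma rev_pa_a {x : V} : (revDAG G a b hc).edge x a ↔ (G.edge x a ∨ x = b) := by
  constructor
  · rintro (⟨h1, h2⟩ | ⟨rfl, -⟩)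
    · exact Or.inl h1
    · exact Or.inr rfl
  · rintro (h | rfl)
    · refine Or.inl ⟨h, ?_⟩
      rintro ⟨h1, -⟩
      rw [h1] at h
      exact edge_irrefl G a h
    · exact Or.inr ⟨rfl, rfl⟩

lemma rev_ch_a {x : V} : (revDAG G a b hc).edge a x ↔ (G.edge a x ∧ x ≠ b) := by
  constructor
  · rintro (⟨h1, h2⟩ | ⟨h1, rfl⟩)
    · refine ⟨h1, ?_⟩
      rintro rfl
      exact h2 ⟨rfl, rfl⟩
    · exact absurd h1 hc.ne
  · rintro ⟨h, hne⟩
    exact Or.inl ⟨h, fun hk => hne hk.2⟩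

lemma rev_ch_b {x : V} : (revDAG G a b hc).edge b x ↔ (G.edge b x ∨ x = a) := by
  constructor
  · rintro (⟨h1, h2⟩ | ⟨-, rfl⟩)
    · exact Or.inl h1
    · exact Or.inr rfl
  · rintro (h | rfl)
    · refine Or.inl ⟨h, ?_⟩
      rintro ⟨rfl, rfl⟩
      exact hc.ne rfl
    · exact Or.inr ⟨rfl, rfl⟩

lemma rev_adj {u v : V} : (revDAG G a b hc).adj u v ↔ G.adj u v := by
  constructor
  · rintro (h | h) <;> rcases h with ⟨h1, -⟩ | ⟨rfl, rfl⟩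
    · exact Or.inl h1
    · exact Or.inr hc.1
    · exact Or.inr h1
    · exact Or.inl hc.1
  · rintro (h | h)
    · by_cases hk : u = a ∧ v = b
      · obtain ⟨rfl, rfl⟩ := hk
        exact Or.inr (Or.inr ⟨rfl, rfl⟩)
      · exact Or.inl (Or.inl ⟨h, hk⟩)
    · by_cases hk : v = a ∧ u = b
      · obtain ⟨rfl, rfl⟩ := hk
        exact Or.inl (Or.inr ⟨rfl, rfl⟩)
      · exact Or.inr (Or.inl ⟨h, hk⟩)

/-- reversal of a covered edge preserves unshielded colliders. -/
lemma rev_collider_iff {x k y : V} (hxy : x ≠ y) (hnxy : ¬ G.adj x y) :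
    (G.IsCollider x k y ↔ (revDAG G a b hc).IsCollider x k y) := by
  by_cases hkb : k = b
  · subst hkb
    constructor
    · rintro ⟨h1, h2⟩
      have hxa : x ≠ a := by
        rintro rfl
        have h2' := (hc.2 y).mpr ⟨h2, fun hy => hxy hy.symm⟩
        exact hnxy (Or.inr h2')
      have hya : y ≠ a := by
        rintro rfl
        have h1' := (hc.2 x).mpr ⟨h1, hxy⟩
        exact hnxy (Or.inl h1')
      exact ⟨(rev_pa_b hc).mpr ((hc.2 x).mpr ⟨h1, hxa⟩),
        (rev_pa_b hc).mpr ((hc.2 y).mpr ⟨h2, hya⟩)⟩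
    · rintro ⟨h1, h2⟩
      exact ⟨((hc.2 x).mp ((rev_pa_b hc).mp h1)).1, ((hc.2 y).mp ((rev_pa_b hc).mp h2)).1⟩
  · by_cases hka : k = a
    · subst hka
      constructor
      · rintro ⟨h1, h2⟩
        exact ⟨(rev_pa_a hc).mpr (Or.inl h1), (rev_pa_a hc).mpr (Or.inl h2)⟩
      · rintro ⟨h1, h2⟩
        rcases (rev_pa_a hc).mp h1 with hx | rfl
        · rcases (rev_pa_a hc).mp h2 with hy | rfl
          · exact ⟨hx, hy⟩
          · exact absurd (Or.inl ((hc.2 x).mp hx).1) hnxy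
        · rcases (rev_pa_a hc).mp h2 with hy | hy
          · exact absurd (Or.inr ((hc.2 y).mp hy).1) hnxy
          · exact absurd (hy.symm : x = y) hxy
    · have e1 : (revDAG G a b hc).edge x k ↔ G.edge x k :=
        rev_edge_other hc (by rintro (⟨-, rfl⟩ | ⟨-, rfl⟩) <;> [exact hkb rfl; exact hka rfl])
      have e2 : (revDAG G a b hc).edge y k ↔ G.edge y k :=
        rev_edge_other hc (by rintro (⟨-, rfl⟩ | ⟨-, rfl⟩) <;> [exact hkb rfl; exact hka rfl])
      unfold DAG.IsCollider
      rw [e1, e2]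

/-- the reversed edge is covered in the reversed graph. -/
lemma rev_covered : Covered (revDAG G a b hc) b a := by
  refine ⟨rev_edge_ba hc, ?_⟩
  intro x
  rw [rev_pa_b hc, rev_pa_a hc]
  constructor
  · intro h
    refine ⟨Or.inl h, ?_⟩
    intro hxb
    rw [hxb] at h
    exact edge_irrefl G b (((hc.2 b).mp h).1)
  · rintro ⟨h | rfl, hxb⟩
    · exact h
    · exact absurd rfl hxb

lemma rev_rev_edge {u v : V} :
    (revDAG (revDAG G a b hc) b a (rev_covered hc)).edge u v ↔ G.edge u v := by
  constructor
  · rintro (⟨h1, h2⟩ | ⟨rfl, rfl⟩)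
    · rcases h1 with ⟨h3, -⟩ | ⟨rfl, rfl⟩
      · exact h3
      · exact absurd ⟨rfl, rfl⟩ h2
    · exact hc.1
  · intro h
    by_cases hk : u = a ∧ v = b
    · obtain ⟨rfl, rfl⟩ := hk
      exact Or.inr ⟨rfl, rfl⟩
    · refine Or.inl ⟨Or.inl ⟨h, hk⟩, ?_⟩
      rintro ⟨rfl, rfl⟩
      exact edge_asymm G h hc.1

end RevFacts

/-- the set of oppositely-oriented edges of two graphs on the same skeleton. -/
def Diff (G H : DAG V) : Set (V × V) := {p | G.edge p.1 p.2 ∧ H.edge p.2 p.1}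

lemma diff_rev {G H : DAG V} {a b : V} (hc : Covered G a b) (hmem : (a, b) ∈ Diff G H) :
    Diff (revDAG G a b hc) H = Diff G H \ {(a, b)} := by
  ext ⟨u, v⟩
  constructor
  · rintro ⟨h1, h2⟩
    rcases h1 with ⟨h3, h4⟩ | ⟨rfl, rfl⟩
    · refine ⟨⟨h3, h2⟩, ?_⟩
      simp only [Set.mem_singleton_iff, Prod.mk.injEq]
      intro hk
      exact h4 ⟨hk.1, hk.2⟩
    · exact absurd (edge_asymm H h2 hmem.2) id
  · rintro ⟨⟨h1, h2⟩, h3⟩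
    simp only [Set.mem_singleton_iff, Prod.mk.injEq, not_and] at h3
    refine ⟨Or.inl ⟨h1, ?_⟩, h2⟩
    rintro ⟨rfl, rfl⟩
    exact h3 rfl rfl

lemma exists_min_finite {α : Type} {r : α → α → Prop} (htr : Transitive r)
    (hirr : ∀ x, ¬ r x x) :
    ∀ n (S : Set α), S.Finite → S.Nonempty → S.ncard = n → ∃ m ∈ S, ∀ x ∈ S, ¬ r x m := by
  intro n
  induction n using Nat.strong_induction_on with
  | _ n ih =>
    intro S hfin hne hcard
    obtain ⟨m0, hm0⟩ := hne
    by_cases hmin : ∀ x ∈ S, ¬ r x m0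
    · exact ⟨m0, hm0, hmin⟩
    · push_neg at hmin
      obtain ⟨x0, hx0S, hrx⟩ := hmin
      set S' : Set α := {x ∈ S | r x m0} with hS'
      have hsub : S' ⊆ S := fun x hx => hx.1
      have hm0n : m0 ∉ S' := fun hk => hirr m0 hk.2
      have hss : S' ⊂ S := ⟨hsub, fun hk => hm0n (hk hm0)⟩
      have hlt : S'.ncard < n := hcard ▸ Set.ncard_lt_ncard hss hfin
      obtain ⟨m, hmS', hmmin⟩ := ih S'.ncard hlt S' (hfin.subset hsub) ⟨x0, hx0S, hrx⟩ rfl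
      refine ⟨m, hmS'.1, ?_⟩
      intro x hxS hrxm
      exact hmmin x ⟨hxS, htr hrxm hmS'.2⟩ hrxm

lemma exists_covered_diff [Fintype V] {G H : DAG V}
    (hadj : ∀ u v, G.adj u v ↔ H.adj u v) (huc : IsUCeq G H)
    (hne : (Diff G H).Nonempty) : ∃ a b, (a, b) ∈ Diff G H ∧ Covered G a b := by
  classical
  have htr : Transitive (fun x y => TransGen G.edge x y) := fun _ _ _ h1 h2 => h1.trans h2
  have hirr : ∀ x, ¬ TransGen G.edge x x := G.acyclic
  set T : Set V := {y | ∃ x, (x, y) ∈ Diff G H} with hT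
  have hTne : T.Nonempty := by
    obtain ⟨p, hp⟩ := hne
    exact ⟨p.2, p.1, hp⟩
  obtain ⟨b0, hb0T, hb0min⟩ := exists_min_finite htr hirr T.ncard T (Set.toFinite T) hTne rfl
  set A : Set V := {x | (x, b0) ∈ Diff G H} with hA
  have hAne : A.Nonempty := hb0T
  have htr' : Transitive (fun x y => TransGen G.edge y x) := fun _ _ _ h1 h2 => h2.trans h1
  have hirr' : ∀ x, ¬ TransGen G.edge x x := G.acyclic
  obtain ⟨a0, ha0A, ha0max⟩ := exists_min_finite htr' hirr' A.ncard A (Set.toFinite A) hAne rfl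
  have hab : (a0, b0) ∈ Diff G H := ha0A
  have hGab : G.edge a0 b0 := hab.1
  have hHba : H.edge b0 a0 := hab.2
  refine ⟨a0, b0, hab, hGab, ?_⟩
  intro x
  constructor
  · -- parents of a0 are parents of b0
    intro hxa
    have hxa0 : x ≠ a0 := fun h => edge_irrefl G a0 (h ▸ hxa)
    refine ⟨?_, hxa0⟩
    by_contra hxb
    by_cases hadjxb : G.adj x b0
    · rcases hadjxb with h' | h'
      · exact hxb h'
      · exact G.acyclic a0 ((TransGen.single hGab).trans ((TransGen.single h').tail hxa))
    · -- unshielded triple (y, a0, b0) with y = x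
      have hxneb : x ≠ b0 := by
        rintro rfl
        exact edge_asymm G hGab hxa
      have hGcol : ¬ G.IsCollider x a0 b0 := by
        rintro ⟨-, h2⟩
        exact edge_asymm G hGab h2
      have hHcol : ¬ H.IsCollider x a0 b0 :=
        fun hk => hGcol ((huc x a0 b0 hxneb (Or.inl hxa) (Or.inr hGab) hadjxb).mpr hk)
      have hHxa : ¬ H.edge x a0 := fun hk => hHcol ⟨hk, hHba⟩
      have hHax : H.edge a0 x := by
        have : H.adj x a0 := (hadj x a0).mp (Or.inl hxa)
        rcases this with h' | h'
        · exact absurd h' hHxa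
        · exact h'
      have : (x, a0) ∈ Diff G H := ⟨hxa, hHax⟩
      exact hb0min a0 ⟨x, this⟩ (TransGen.single hGab)
  · -- parents of b0 (other than a0) are parents of a0
    rintro ⟨hxb, hxa0⟩
    by_cases hadjxa : G.adj x a0
    · rcases hadjxa with h' | h'
      · exact h'
      · -- G.edge a0 x : derive a contradiction
        exfalso
        by_cases hHxa : H.edge x a0
        · exact hb0min x ⟨a0, ⟨h', hHxa⟩⟩ (TransGen.single hxb)
        · have hHax : H.edge a0 x := by
            have : H.adj a0 x := (hadj a0 x).mp (Or.inl h')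
            rcases this with h'' | h''
            · exact h''
            · exact absurd h'' hHxa
          have hHxb : ¬ H.edge x b0 := by
            intro hk
            exact H.acyclic b0 (((TransGen.single hHba).tail hHax).tail hk)
          have hHbx : H.edge b0 x := by
            have : H.adj x b0 := (hadj x b0).mp (Or.inl hxb)
            rcases this with h'' | h''
            · exact absurd h'' hHxb
            · exact h''
          exact ha0max x ⟨hxb, hHbx⟩ (TransGen.single h')
    · -- unshielded triple (x, b0, a0)
      exfalso
      have hGcol : G.IsCollider x b0 a0 := ⟨hxb, hGab⟩
      have hHcol : H.IsCollider x b0 a0 :=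
        (huc x b0 a0 hxa0 (Or.inl hxb) (Or.inl hGab) hadjxa).mp hGcol
      exact edge_asymm H hHcol.2 hHba

end MinimalityChain
namespace MinimalityChain

variable {V : Type}

lemma legal_some_iff {C : Set V} {u : V} {f g : Bool} :
    legal C u (some f) g ↔ ((f = true ∧ g = false) ↔ u ∈ C) := Iff.rfl

lemma legal_none' {C : Set V} {u : V} {g : Bool} : legal C u none g := trivial

lemma legal_false_any {C : Set V} {u : V} {g : Bool} (h : u ∉ C) :
    legal C u (some false) g := by
  rw [legal_some_iff]
  simp [h]

lemma legal_any_true {C : Set V} {u : V} {f : Bool} (h : u ∉ C) :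
    legal C u (some f) true := by
  rw [legal_some_iff]
  simp [h]

lemma legal_true_false {C : Set V} {u : V} (h : u ∈ C) :
    legal C u (some true) false := by
  rw [legal_some_iff]
  simp [h]

/-- capability: the converted walk can stand at `a` ready to leave along any edge. -/
def QA (G1 : DAG V) (C : Set V) (i a : V) : Prop :=
  i = a ∨ Reach G1 C i a (some false)

/-- capability: the converted walk can stand at `b` (which is not in `C`) ready to leave. -/
def QB (G1 : DAG V) (C : Set V) (i b : V) : Prop :=
  i = b ∨ (b ∉ C ∧ Reach G1 C i b (some false))

/-- capability: the converted walk can stand at some parent `w` of `a`,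
ready to leave along an outgoing edge. -/
def QW (G G1 : DAG V) (C : Set V) (i a : V) : Prop :=
  ∃ w, G.edge w a ∧ (i = w ∨ (w ∉ C ∧ ∃ g, Reach G1 C i w (some g)))

def Q3 (G G1 : DAG V) (C : Set V) (i a b : V) : Prop :=
  QA G1 C i a ∨ QB G1 C i b ∨ QW G G1 C i a

def Q4 (G G1 : DAG V) (C : Set V) (i a b : V) : Prop :=
  QA G1 C i a ∨ QB G1 C i b ∨ (b ∈ C ∧ QW G G1 C i a)

lemma q4_to_q3 {G G1 : DAG V} {C : Set V} {i a b : V} (h : Q4 G G1 C i a b) :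
    Q3 G G1 C i a b := by
  rcases h with h | h | ⟨-, h⟩
  · exact Or.inl h
  · exact Or.inr (Or.inl h)
  · exact Or.inr (Or.inr h)

/-- the simulation invariant. -/
def Phi (G G1 : DAG V) (C : Set V) (i a b : V) (v : V) (f : Bool) : Prop :=
  (v ∈ C ∧ f = false) ∨ Reach G1 C i v (some f) ∨
  (v ∉ C ∧ f = true ∧ Reach G1 C i v (some false)) ∨
  (v = b ∧ f = true ∧ a ∉ C ∧ Q3 G G1 C i a b) ∨
  (v = a ∧ f = false ∧ a ∉ C ∧ Q4 G G1 C i a b)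

section BCoreHelpers

variable {G : DAG V} {a b : V} (hc : Covered G a b) {C : Set V} {i : V}

lemma atA (hqa : QA (revDAG G a b hc) C i a) (haC : a ∉ C) {x : V} {g : Bool}
    (he : eflag (revDAG G a b hc) a x g) : Reach (revDAG G a b hc) C i x (some g) := by
  rcases hqa with hia | hr
  · have hs : Reach (revDAG G a b hc) C i a none := by rw [hia]; exact Reach.start
    exact Reach.step hs he legal_none'
  · exact Reach.step hr he (legal_false_any haC)

lemma qw_reach_b (hqw : QW G (revDAG G a b hc) C i a) :
    Reach (revDAG G a b hc) C i b (some true) := by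
  obtain ⟨w, hwa, hw⟩ := hqw
  have he : eflag (revDAG G a b hc) w b true := eflag_true ((rev_pa_b hc).mpr hwa)
  rcases hw with hiw | ⟨hwC, g, hr⟩
  · have hs : Reach (revDAG G a b hc) C i w none := by rw [hiw]; exact Reach.start
    exact Reach.step hs he legal_none'
  · exact Reach.step hr he (legal_any_true hwC)

lemma qw_reach_a (hqw : QW G (revDAG G a b hc) C i a) :
    Reach (revDAG G a b hc) C i a (some true) := by
  obtain ⟨w, hwa, hw⟩ := hqw
  have he : eflag (revDAG G a b hc) w a true := eflag_true ((rev_pa_a hc).mpr (Or.inl hwa))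
  rcases hw with hiw | ⟨hwC, g, hr⟩
  · have hs : Reach (revDAG G a b hc) C i w none := by rw [hiw]; exact Reach.start
    exact Reach.step hs he legal_none'
  · exact Reach.step hr he (legal_any_true hwC)

lemma HQ1 (hbC : b ∈ C) (haC : a ∉ C) (hq : Q3 G (revDAG G a b hc) C i a b) {x : V}
    (hxb : G.edge x b) (hxa : x ≠ a) : Reach (revDAG G a b hc) C i x (some false) := by
  have hxa' : G.edge x a := (hc.2 x).mpr ⟨hxb, hxa⟩
  have hex : eflag (revDAG G a b hc) a x false := eflag_false ((rev_pa_a hc).mpr (Or.inl hxa'))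
  have hexb : eflag (revDAG G a b hc) b x false := eflag_false ((rev_pa_b hc).mpr hxa')
  rcases hq with hqa | hqb | hqw
  · exact atA hc hqa haC hex
  · rcases hqb with hib | ⟨hbC', -⟩
    · have hs : Reach (revDAG G a b hc) C i b none := by rw [hib]; exact Reach.start
      exact Reach.step hs hexb legal_none'
    · exact absurd hbC hbC'
  · exact Reach.step (qw_reach_b hc hqw) hexb (legal_true_false hbC)

lemma HQ2 (haC : a ∉ C) (hq : Q3 G (revDAG G a b hc) C i a b) {x : V}
    (hax : G.edge a x) (hxb : x ≠ b) : Reach (revDAG G a b hc) C i x (some true) := by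
  have hef : eflag (revDAG G a b hc) a x true := eflag_true ((rev_ch_a hc).mpr ⟨hax, hxb⟩)
  rcases hq with hqa | hqb | hqw
  · exact atA hc hqa haC hef
  · have hba : eflag (revDAG G a b hc) b a true := eflag_true (rev_edge_ba hc)
    have h1 : Reach (revDAG G a b hc) C i a (some true) := by
      rcases hqb with hib | ⟨hbC, hr⟩
      · have hs : Reach (revDAG G a b hc) C i b none := by rw [hib]; exact Reach.start
        exact Reach.step hs hba legal_none'
      · exact Reach.step hr hba (legal_false_any hbC)
    exact Reach.step h1 hef (legal_any_true haC)
  · exact Reach.step (qw_reach_a hc hqw) hef (legal_any_true haC)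

lemma HQ3 (hbC : b ∉ C) (haC : a ∉ C) (hq : Q3 G (revDAG G a b hc) C i a b) {x : V}
    (hbx : G.edge b x) : Reach (revDAG G a b hc) C i x (some true) := by
  have hef : eflag (revDAG G a b hc) b x true := eflag_true ((rev_ch_b hc).mpr (Or.inl hbx))
  rcases hq with hqa | hqb | hqw
  · have hab : eflag (revDAG G a b hc) a b false := eflag_false (rev_edge_ba hc)
    have h1 : Reach (revDAG G a b hc) C i b (some false) := atA hc hqa haC hab
    exact Reach.step h1 hef (legal_false_any hbC)
  · rcases hqb with hib | ⟨-, hr⟩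
    · have hs : Reach (revDAG G a b hc) C i b none := by rw [hib]; exact Reach.start
      exact Reach.step hs hef legal_none'
    · exact Reach.step hr hef (legal_false_any hbC)
  · exact Reach.step (qw_reach_b hc hqw) hef (legal_any_true hbC)

lemma HQ6 (haC : a ∉ C) (hq : Q4 G (revDAG G a b hc) C i a b) {x : V}
    (hxa : G.edge x a) : Reach (revDAG G a b hc) C i x (some false) := by
  have hex : eflag (revDAG G a b hc) a x false := eflag_false ((rev_pa_a hc).mpr (Or.inl hxa))
  have hexb : eflag (revDAG G a b hc) b x false := eflag_false ((rev_pa_b hc).mpr hxa)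
  rcases hq with hqa | hqb | ⟨hbC, hqw⟩
  · exact atA hc hqa haC hex
  · rcases hqb with hib | ⟨hbC, hr⟩
    · have hs : Reach (revDAG G a b hc) C i b none := by rw [hib]; exact Reach.start
      exact Reach.step hs hexb legal_none'
    · exact Reach.step hr hexb (legal_false_any hbC)
  · exact Reach.step (qw_reach_b hc hqw) hexb (legal_true_false hbC)

lemma HQ_endB (haC : a ∉ C) (hib : i ≠ b) (hq : Q3 G (revDAG G a b hc) C i a b) :
    ∃ f, Reach (revDAG G a b hc) C i b (some f) := by
  rcases hq with hqa | hqb | hqw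
  · exact ⟨false, atA hc hqa haC (eflag_false (rev_edge_ba hc))⟩
  · rcases hqb with hib' | ⟨-, hr⟩
    · exact absurd hib' hib
    · exact ⟨false, hr⟩
  · exact ⟨true, qw_reach_b hc hqw⟩

lemma HQ_endA (haC : a ∉ C) (hia : i ≠ a) (hq : Q4 G (revDAG G a b hc) C i a b) :
    ∃ f, Reach (revDAG G a b hc) C i a (some f) := by
  rcases hq with hqa | hqb | ⟨hbC, hqw⟩
  · rcases hqa with hia' | hr
    · exact absurd hia' hia
    · exact ⟨false, hr⟩
  · rcases hqb with hib | ⟨hbC', hr⟩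
    · have hs : Reach (revDAG G a b hc) C i b none := by rw [hib]; exact Reach.start
      exact ⟨true, Reach.step hs (eflag_true (rev_edge_ba hc)) legal_none'⟩
    · exact ⟨true, Reach.step hr (eflag_true (rev_edge_ba hc)) (legal_false_any hbC')⟩
  · exact ⟨true, qw_reach_a hc hqw⟩

lemma invB (h : Reach (revDAG G a b hc) C i b (some true)) : QW G (revDAG G a b hc) C i a := by
  cases h with
  | @step u v of g hr he hok =>
    have hua : G.edge u a := (rev_pa_b hc).mp he
    refine ⟨u, hua, ?_⟩
    cases of with
    | none => exact Or.inl (reach_none hr).symm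
    | some f =>
      rw [legal_some_iff] at hok
      have huC : u ∉ C := by
        intro hm
        have h2 := hok.mpr hm
        simp at h2
      exact Or.inr ⟨huC, f, hr⟩

lemma invA (h : Reach (revDAG G a b hc) C i a (some true)) : Q3 G (revDAG G a b hc) C i a b := by
  cases h with
  | @step u v of g hr he hok =>
    rcases (rev_pa_a hc).mp he with hua | hub
    · refine Or.inr (Or.inr ⟨u, hua, ?_⟩)
      cases of with
      | none => exact Or.inl (reach_none hr).symm
      | some f =>
        rw [legal_some_iff] at hok
        have huC : u ∉ C := by
          intro hm
          have h2 := hok.mpr hm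
          simp at h2
        exact Or.inr ⟨huC, f, hr⟩
    · obtain rfl := hub.symm
      cases of with
      | none => exact Or.inr (Or.inl (Or.inl (reach_none hr).symm))
      | some fb =>
        rw [legal_some_iff] at hok
        have hbC : b ∉ C := by
          intro hm
          have h2 := hok.mpr hm
          simp at h2
        cases fb with
        | false => exact Or.inr (Or.inl (Or.inr ⟨hbC, hr⟩))
        | true => exact Or.inr (Or.inr (invB hc hr))

end BCoreHelpers

end MinimalityChain
namespace MinimalityChain

variable {V : Type}

theorem simPhi {G : DAG V} {a b : V} (hc : Covered G a b) {C : Set V} {i : V} (hiC : i ∉ C) :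
    ∀ {v : V} {of : Option Bool}, Reach G C i v of → ∀ f, of = some f →
      Phi G (revDAG G a b hc) C i a b v f := by
  intro v of h
  induction h with
  | start => intro f hf; exact absurd hf (by simp)
  | @step u v of g hr he hok ih =>
    intro f hf
    obtain rfl : g = f := by injection hf
    by_cases hab : u = a ∧ v = b
    · -- E2 : the edge a→b traversed forwards
      obtain rfl := hab.1.symm
      obtain rfl := hab.2.symm
      have hg : g = true := by
        cases g
        · exact absurd (he : G.edge b a) (fun h' => edge_asymm G hc.1 h')
        · rfl
      obtain rfl := hg
      have haC : a ∉ C := by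
        cases of with
        | none =>
          have hai : a = i := reach_none hr
          rw [hai]; exact hiC
        | some f' =>
          rw [legal_some_iff] at hok
          intro hm
          have h2 := hok.mpr hm
          simp at h2
      refine Or.inr (Or.inr (Or.inr (Or.inl ⟨rfl, rfl, haC, ?_⟩)))
      cases of with
      | none => exact Or.inl (Or.inl (reach_none hr).symm)
      | some f' =>
        rcases ih f' rfl with ⟨haC', -⟩ | h1 | ⟨-, -, h2⟩ | ⟨haeq, -, -, -⟩ | ⟨-, -, -, hq4⟩
        · exact absurd haC' haC
        · cases f' with
          | false => exact Or.inl (Or.inr h1)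
          | true => exact invA hc h1
        · exact Or.inl (Or.inr h2)
        · exact absurd haeq hc.ne
        · exact q4_to_q3 hq4
    · by_cases hba : u = b ∧ v = a
      · -- E3 : the edge a→b traversed backwards
        obtain rfl := hba.1.symm
        obtain rfl := hba.2.symm
        have hg : g = false := by
          cases g
          · rfl
          · exact absurd (he : G.edge b a) (fun h' => edge_asymm G hc.1 h')
        obtain rfl := hg
        by_cases haC : a ∈ C
        · exact Or.inl ⟨haC, rfl⟩
        · refine Or.inr (Or.inr (Or.inr (Or.inr ⟨rfl, rfl, haC, ?_⟩)))
          cases of with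
          | none => exact Or.inr (Or.inl (Or.inl (reach_none hr).symm))
          | some f' =>
            rw [legal_some_iff] at hok
            have hleg : f' = true ↔ b ∈ C := by simpa using hok
            rcases ih f' rfl with ⟨hbC, hf'⟩ | h1 | ⟨hbC, hf', -⟩ | ⟨-, hf', -, hq3⟩ | ⟨heq, -, -, -⟩
            · rw [hf'] at hleg
              exact absurd (hleg.mpr hbC) (by simp)
            · cases f' with
              | true =>
                have hbC : b ∈ C := hleg.mp rfl
                exact Or.inr (Or.inr ⟨hbC, invB hc h1⟩)
              | false =>
                have hbC' : b ∉ C := by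
                  intro hm
                  exact absurd (hleg.mpr hm) (by simp)
                exact Or.inr (Or.inl (Or.inr ⟨hbC', h1⟩))
            · rw [hf'] at hleg
              exact absurd (hleg.mp rfl) hbC
            · rw [hf'] at hleg
              have hbC2 : b ∈ C := hleg.mp rfl
              rcases hq3 with hqa | hqb | hqw
              · exact Or.inl hqa
              · exact Or.inr (Or.inl hqb)
              · exact Or.inr (Or.inr ⟨hbC2, hqw⟩)
            · exact absurd heq.symm hc.ne
      · -- E1 : an ordinary edge, present in both graphs
        have hP : ¬((u = a ∧ v = b) ∨ (u = b ∧ v = a)) := by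
          rintro (h' | h')
          · exact hab h'
          · exact hba h'
        have he1 : eflag (revDAG G a b hc) u v g := by
          cases g
          · exact eflag_false (rev_edge_of_edge hc (he : G.edge v u)
              (fun hk => hP (Or.inr ⟨hk.2, hk.1⟩)))
          · exact eflag_true (rev_edge_of_edge hc (he : G.edge u v)
              (fun hk => hP (Or.inl hk)))
        cases of with
        | none =>
          have hs : Reach (revDAG G a b hc) C i u none := by
            rw [reach_none hr]; exact Reach.start
          exact Or.inr (Or.inl (Reach.step hs he1 legal_none'))
        | some f' =>
          rcases ih f' rfl with ⟨huC, hf'⟩ | h1 | ⟨huC, hf', h2⟩ |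
            ⟨hub, hf', haC, hq3⟩ | ⟨hua, hf', haC, hq4⟩
          · -- D0 : dead state, legality is contradictory
            obtain rfl := hf'
            rw [legal_some_iff] at hok
            have : u ∉ C := by
              intro hm
              have h2 := hok.mpr hm
              simp at h2
            exact absurd huC this
          · -- D1 : direct simulation
            exact Or.inr (Or.inl (Reach.step h1 he1 hok))
          · -- D2
            obtain rfl := hf'
            rw [legal_some_iff] at hok
            have hg : g = true := by
              cases g
              · exact absurd (hok.mp ⟨rfl, rfl⟩) huC
              · rfl
            obtain rfl := hg
            exact Or.inr (Or.inl (Reach.step h2 he1 (legal_false_any huC)))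
          · -- D3 : state (b, true)
            obtain rfl := hub.symm
            obtain rfl := hf'
            rw [legal_some_iff] at hok
            by_cases hbC : b ∈ C
            · have hg : g = false := (hok.mpr hbC).2
              obtain rfl := hg
              have hvb : G.edge v b := he
              have hva : v ≠ a := fun hk => hP (Or.inr ⟨rfl, hk⟩)
              by_cases hvC : v ∈ C
              · exact Or.inl ⟨hvC, rfl⟩
              · exact Or.inr (Or.inl (HQ1 hc hbC haC hq3 hvb hva))
            · have hg : g = true := by
                cases g
                · exact absurd (hok.mp ⟨rfl, rfl⟩) hbC
                · rfl
              obtain rfl := hg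
              have hbv : G.edge b v := he
              exact Or.inr (Or.inl (HQ3 hc hbC haC hq3 hbv))
          · -- D4 : state (a, false)
            obtain rfl := hua.symm
            obtain rfl := hf'
            cases g with
            | false =>
              have hva : G.edge v a := he
              by_cases hvC : v ∈ C
              · exact Or.inl ⟨hvC, rfl⟩
              · exact Or.inr (Or.inl (HQ6 hc haC hq4 hva))
            | true =>
              have hav : G.edge a v := he
              have hvb : v ≠ b := fun hk => hP (Or.inl ⟨rfl, hk⟩)
              exact Or.inr (Or.inl (HQ2 hc haC (q4_to_q3 hq4) hav hvb))

end MinimalityChain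
namespace MinimalityChain

open Relation

variable {V : Type}

lemma covered_rev_connWalk {G : DAG V} {a b : V} (hc : Covered G a b) {C : Set V} {i j : V}
    (hiC : i ∉ C) (hjC : j ∉ C) (hij : i ≠ j) (h : G.ConnWalk i j C) :
    (revDAG G a b hc).ConnWalk i j C := by
  obtain ⟨f, hr⟩ := reach_of_connWalk hij h
  have hphi := simPhi hc hiC hr f rfl
  rcases hphi with ⟨hjC', -⟩ | h1 | ⟨-, -, h2⟩ | ⟨hjb, -, haC, hq3⟩ | ⟨hja, -, haC, hq4⟩
  · exact absurd hjC' hjC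
  · exact connWalk_of_reach h1
  · exact connWalk_of_reach h2
  · obtain rfl := hjb.symm
    obtain ⟨f', h'⟩ := HQ_endB hc haC hij hq3
    exact connWalk_of_reach h'
  · obtain rfl := hja.symm
    obtain ⟨f', h'⟩ := HQ_endA hc haC hij hq4
    exact connWalk_of_reach h'

lemma mem_notin_of_disjTriple {A B C : Set V} (hd : DisjTriple ((A, B, C) : Set V × Set V × Set V))
    {x y : V} (hx : x ∈ A) (hy : y ∈ B) : x ∉ C ∧ y ∉ C ∧ x ≠ y := by
  refine ⟨fun hk => ?_, fun hk => ?_, fun hk => ?_⟩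
  · exact Set.disjoint_left.mp hd.2.1 hx hk
  · exact Set.disjoint_left.mp hd.2.2 hy hk
  · exact Set.disjoint_left.mp hd.1 hx (hk ▸ hy)

lemma J_rev {G : DAG V} {a b : V} (hc : Covered G a b) :
    DAG.J G = DAG.J (revDAG G a b hc) := by
  ext t
  obtain ⟨A, B, C⟩ := t
  constructor
  · rintro ⟨hd, hs⟩
    refine ⟨hd, ?_⟩
    intro x hx y hy hcw
    obtain ⟨hxC, hyC, hxy⟩ := mem_notin_of_disjTriple hd hx hy
    have hcw2 := covered_rev_connWalk (rev_covered hc) hxC hyC hxy hcw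
    have hcw3 : G.ConnWalk x y C :=
      connWalk_congr (fun u v => rev_rev_edge hc) hcw2
    exact hs x hx y hy hcw3
  · rintro ⟨hd, hs⟩
    refine ⟨hd, ?_⟩
    intro x hx y hy hcw
    obtain ⟨hxC, hyC, hxy⟩ := mem_notin_of_disjTriple hd hx hy
    exact hs x hx y hy (covered_rev_connWalk hc hxC hyC hxy hcw)

theorem J_eq_of_skel_uc [Fintype V] :
    ∀ n (G H : DAG V), (Diff G H).ncard = n →
      (∀ u v, G.adj u v ↔ H.adj u v) → IsUCeq G H → DAG.J G = DAG.J H := by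
  intro n
  induction n using Nat.strong_induction_on with
  | _ n ih =>
    intro G H hcard hadj huc
    rcases Set.eq_empty_or_nonempty (Diff G H) with hemp | hne
    · apply J_congr
      intro u v
      constructor
      · intro h
        rcases (hadj u v).mp (Or.inl h) with h' | h'
        · exact h'
        · exfalso
          have hm : (u, v) ∈ Diff G H := ⟨h, h'⟩
          rw [hemp] at hm
          exact hm
      · intro h
        rcases (hadj u v).mpr (Or.inl h) with h' | h'
        · exact h'
        · exfalso
          have hm : (v, u) ∈ Diff G H := ⟨h', h⟩
          rw [hemp] at hm
          exact hm
    · obtain ⟨a, b, hmem, hcov⟩ := exists_covered_diff hadj huc hne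
      have h1 : DAG.J G = DAG.J (revDAG G a b hcov) := J_rev hcov
      have hadj1 : ∀ u v, (revDAG G a b hcov).adj u v ↔ H.adj u v :=
        fun u v => (rev_adj hcov).trans (hadj u v)
      have huc1 : IsUCeq (revDAG G a b hcov) H := by
        intro x k y hxy hxk hyk hnxy
        have hxk' : G.adj x k := (rev_adj hcov).mp hxk
        have hyk' : G.adj y k := (rev_adj hcov).mp hyk
        have hnxy' : ¬ G.adj x y := fun hk => hnxy ((rev_adj hcov).mpr hk)
        exact (rev_collider_iff hcov hxy hnxy').symm.trans (huc x k y hxy hxk' hyk' hnxy')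
      have hdiff : Diff (revDAG G a b hcov) H = Diff G H \ {(a, b)} := diff_rev hcov hmem
      have hlt : (Diff (revDAG G a b hcov) H).ncard < n := by
        rw [hdiff, ← hcard]
        exact Set.ncard_lt_ncard ((Set.sdiff_singleton_ssubset).mpr hmem) (Set.toFinite _)
      exact h1.trans (ih _ hlt (revDAG G a b hcov) H rfl hadj1 huc1)

end MinimalityChain
open MinimalityChain in
/-- Relation of minimality assumptions for DAGs (Proposition 1): minimally
Markovian implies sparsest Markov, which implies Pearl-minimal, which implies
causally minimal. -/
theorem minimality_chain_DAG {V : Type} [Fintype V]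
    (P : Set (Set V × Set V × Set V)) (hP : ∀ t ∈ P, DisjTriple t)
    (G : DAG V) :
    (MinMarkov P G → SparsestMarkov P G) ∧
    (SparsestMarkov P G → PearlMinimal P G) ∧
    (PearlMinimal P G → CausallyMinimal P G) := by
  refine ⟨?_, ?_, ?_⟩
  · -- minimally Markovian → sparsest Markov
    rintro ⟨hM, hsk⟩
    refine ⟨hM, fun G' hM' => ?_⟩
    apply edgeCard_le
    intro u v hadj
    exact adj_of_skP hM' ((hsk u v).mpr hadj)
  · -- sparsest Markov → Pearl-minimal
    rintro ⟨hM, hmin⟩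
    refine ⟨hM, ?_⟩
    rintro ⟨G', hlt, hsub⟩
    obtain ⟨hJ, hnsub⟩ := ssubset_iff_subset_not_subset.mp hlt
    have hcard : edgeCard G ≤ edgeCard G' := hmin G' hsub
    have hadjiff := adj_iff_of_J_subset hJ hcard
    have huceq := ucEq_of_J_subset hadjiff hJ
    have heq : DAG.J G = DAG.J G' := J_eq_of_skel_uc _ G G' rfl hadjiff huceq
    exact hnsub heq.symm.subset
  · -- Pearl-minimal → causally minimal
    rintro ⟨hM, hmin⟩
    refine ⟨hM, ?_⟩
    rintro ⟨G', hsubg, hne, hM'⟩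
    apply hmin
    have hJsub : DAG.J G ⊆ DAG.J G' := J_subset_of_subgraph hsubg
    have hex : ∃ u v, G.edge u v ∧ ¬ G'.edge u v := by
      by_contra hcon
      push_neg at hcon
      apply hne
      funext u v
      exact propext ⟨hsubg u v, hcon u v⟩
    obtain ⟨u, v, hGe, hG'e⟩ := hex
    have huv : u ≠ v := fun hk => edge_irrefl G u (hk ▸ hGe)
    have hnadj : ¬ G'.adj u v := by
      rintro (h' | h')
      · exact hG'e h'
      · exact edge_asymm G hGe (hsubg v u h')
    obtain ⟨C, hu, hv, hmem'⟩ := sep_of_not_adj G' huv hnadj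
    have hnotJ : (({u}, {v}, C) : Set V × Set V × Set V) ∉ DAG.J G := by
      intro hk
      exact not_connWalk_of_memJ hk (connWalk_of_adj (Or.inl hGe) C)
    refine ⟨G', ?_, hM'⟩
    rw [ssubset_iff_subset_not_subset]
    exact ⟨hJsub, fun hback => hnotJ (hback hmem')⟩
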